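/- For every integer n ≥ 1 the q-Genocchi polynomial G_{n,q} satisfies the q-difference equation Σ_{k=2}^{n} (q^{n-k-1} g_{k,q} / (2 [k]_q!)) · D_q^k G_{n,q}(x) − (q^{n-2}/2) D_q G_{n,q}(x) + q^{n-1} G_{n,q}(x) + x q^n D_q G_{n,q}(x) − [n]_q G_{n,q}(qx) = 0, as an identity of real polynomials in x (the sum is empty when n = 1). -/

import Mathlib

/-!
Comparing coefficients of `x^m` with `n = m + j`, the equation reduces, after dividing by
`[n]_q!/[m]_q!` and a power of `q`, to a quadratic recurrence for `a_k = g_k/[k]_q!`: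
`Σ_{k=2}^{j+1} q^(j+1-k) a_k a_(j+1-k) = q^j a_j + 2 q [j]_q a_(j+1)`.
This is the coefficient form of the q-Riccati equation
`F(t) F(qt) = 2t D_q F(t) - 2F(t) + 2t F(qt)` for `F = 2t/(e_q(t) + 1)`, which follows from
`(e_q(t) + 1) F(t) = 2t` and `e_q(qt) = (1 + (q-1)t) e_q(t)`, i.e. `D_q e_q = e_q`.
-/

open Polynomial Finset

/-- The q-integer [n]_q = 1 + q + ... + q^(n-1). -/
noncomputable def qInt (q : ℝ) (n : ℕ) : ℝ := ∑ i ∈ Finset.range n, q ^ i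

/-- The q-factorial [n]_q! = [1]_q [2]_q ... [n]_q, with [0]_q! = 1. -/
noncomputable def qFact (q : ℝ) : ℕ → ℝ
  | 0 => 1
  | n + 1 => qFact q n * qInt q (n + 1)

/-- The q-binomial coefficient [n choose k]_q = [n]_q! / ([k]_q! [n-k]_q!). -/
noncomputable def qBinom (q : ℝ) (n k : ℕ) : ℝ := qFact q n / (qFact q k * qFact q (n - k))

/-- The q-derivative on real polynomials, determined by D_q(x^n) = [n]_q x^(n-1). -/
noncomputable def qDeriv (q : ℝ) (p : Polynomial ℝ) : Polynomial ℝ :=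
  p.sum fun n a => Polynomial.C (a * qInt q n) * Polynomial.X ^ (n - 1)

/-- The q-derivative on formal power series: `D_{q,t}(t^n) = [n]_q t^(n-1)`. -/
noncomputable def qDerivPS (q : ℝ) (f : PowerSeries ℝ) : PowerSeries ℝ :=
  PowerSeries.mk fun n => qInt q (n + 1) * PowerSeries.coeff (R := ℝ) (n + 1) f

/-- The q-exponential series `e_q(t) = Σ_{n≥0} t^n/[n]_q!`. -/
noncomputable def qExp (q : ℝ) : PowerSeries ℝ := PowerSeries.mk fun n => 1 / qFact q n

/-- The q-Genocchi polynomials `G_{n,q}(x) = Σ_{k=0}^n [n choose k]_q g_{k,q} x^(n-k)`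
attached to the q-Genocchi numbers (g_k). -/
noncomputable def qGenocchiPoly (q : ℝ) (g : ℕ → ℝ) (n : ℕ) : Polynomial ℝ :=
  ∑ k ∈ Finset.range (n + 1), Polynomial.C (qBinom q n k * g k) * Polynomial.X ^ (n - k)

lemma qInt_zero (q : ℝ) : qInt q 0 = 0 := by simp [qInt]

lemma qInt_one (q : ℝ) : qInt q 1 = 1 := by simp [qInt]

lemma qInt_add (q : ℝ) (a b : ℕ) : qInt q (a + b) = qInt q a + q ^ a * qInt q b := by
  simp only [qInt, sum_range_add, pow_add, mul_sum]

lemma sub_one_mul_qInt (q : ℝ) (n : ℕ) : (q - 1) * qInt q n = q ^ n - 1 := by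
  rw [qInt, mul_comm, geom_sum_mul]

lemma qInt_pos {q : ℝ} (hq : 0 < q) {n : ℕ} (hn : 0 < n) : 0 < qInt q n :=
  sum_pos (fun i _ => pow_pos hq i) (nonempty_range_iff.mpr hn.ne')

lemma qFact_succ (q : ℝ) (n : ℕ) : qFact q (n + 1) = qFact q n * qInt q (n + 1) := rfl

lemma qFact_pos {q : ℝ} (hq : 0 < q) (n : ℕ) : 0 < qFact q n := by
  induction n with
  | zero => exact one_pos
  | succ n ih => exact mul_pos ih (qInt_pos hq n.succ_pos)

lemma coeff_qDeriv (q : ℝ) (p : ℝ[X]) (m : ℕ) :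
    (qDeriv q p).coeff m = qInt q (m + 1) * p.coeff (m + 1) := by
  rw [qDeriv, Polynomial.sum_def, finsetSum_coeff, sum_eq_single (m + 1)]
  · rw [coeff_C_mul_X_pow, if_pos (by omega)]
    ring
  · rintro (_ | n) _ hn
    · simp [qInt_zero]
    · rw [coeff_C_mul_X_pow, if_neg (by omega)]
  · intro h
    simp [notMem_support_iff.mp h]

lemma coeff_qDeriv_iterate {q : ℝ} (hq : 0 < q) (k : ℕ) (p : ℝ[X]) (m : ℕ) :
    ((qDeriv q)^[k] p).coeff m = qFact q (m + k) / qFact q m * p.coeff (m + k) := by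
  induction k generalizing m with
  | zero => simp [(qFact_pos hq m).ne']
  | succ k ih =>
    rw [Function.iterate_succ_apply', coeff_qDeriv, ih, add_right_comm, add_assoc, qFact_succ q m]
    have := (qFact_pos hq m).ne'
    have := (qInt_pos hq m.succ_pos).ne'
    field_simp

lemma coeff_X_mul_qDeriv (q : ℝ) (p : ℝ[X]) (m : ℕ) :
    (X * qDeriv q p).coeff m = qInt q m * p.coeff m := by
  rcases m with _ | m
  · simp [qInt_zero]
  · rw [coeff_X_mul, coeff_qDeriv]

lemma coeff_qGenocchiPoly (q : ℝ) (g : ℕ → ℝ) (n m : ℕ) :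
    (qGenocchiPoly q g n).coeff m =
      if m ≤ n then qFact q n / qFact q m * (g (n - m) / qFact q (n - m)) else 0 := by
  rw [qGenocchiPoly, finsetSum_coeff]
  split_ifs with hmn
  · rw [sum_eq_single (n - m)]
    · rw [coeff_C_mul_X_pow, if_pos (by omega), qBinom, Nat.sub_sub_self hmn]
      ring
    · intro k hk hkm
      rw [coeff_C_mul_X_pow, if_neg (by rw [mem_range] at hk; omega)]
    · intro h
      exact absurd (mem_range.mpr (by omega)) h
  · exact sum_eq_zero fun k hk => by rw [coeff_C_mul_X_pow, if_neg (by omega)]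

lemma coeff_qDeriv_iterate_qGenocchiPoly {q : ℝ} (hq : 0 < q) (g : ℕ → ℝ) (k n m : ℕ) :
    ((qDeriv q)^[k] (qGenocchiPoly q g n)).coeff m =
      if m + k ≤ n then
        qFact q n / qFact q m * (g (n - (m + k)) / qFact q (n - (m + k))) else 0 := by
  rw [coeff_qDeriv_iterate hq, coeff_qGenocchiPoly]
  split_ifs
  · have := (qFact_pos hq (m + k)).ne'
    field_simp
  · rw [mul_zero]

lemma coeff_sum_Icc_qDeriv_iterate_qGenocchiPoly {q : ℝ} (hq : 0 < q) (g c : ℕ → ℝ)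
    (a m j : ℕ) :
    (∑ k ∈ Icc a (m + j), C (c k) * (qDeriv q)^[k] (qGenocchiPoly q g (m + j))).coeff m
      = qFact q (m + j) / qFact q m * ∑ k ∈ Icc a j, c k * (g (j - k) / qFact q (j - k)) := by
  rw [finsetSum_coeff, mul_sum, ← sum_subset (Icc_subset_Icc_right (Nat.le_add_left j m))]
  · refine sum_congr rfl fun k hk => ?_
    rw [coeff_C_mul, coeff_qDeriv_iterate_qGenocchiPoly hq, if_pos (by simp at hk; omega),
      Nat.add_sub_add_left]
    ring
  · intro k hk hkj
    rw [coeff_C_mul, coeff_qDeriv_iterate_qGenocchiPoly hq, if_neg (by simp at hk hkj; omega),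
      mul_zero]

section PowerSeries

open PowerSeries

lemma C_mul_X_mul_qDerivPS (q : ℝ) (f : ℝ⟦X⟧) :
    PowerSeries.C (q - 1) * (PowerSeries.X * qDerivPS q f) = rescale q f - f := by
  ext (_ | n)
  · rw [PowerSeries.coeff_C_mul, PowerSeries.coeff_zero_X_mul, map_sub, coeff_rescale, pow_zero,
      one_mul, mul_zero, sub_self]
  · rw [PowerSeries.coeff_C_mul, coeff_succ_X_mul, qDerivPS, coeff_mk, map_sub, coeff_rescale,
      ← mul_assoc, sub_one_mul_qInt]
    ring

lemma qDerivPS_qExp {q : ℝ} (hq : 0 < q) : qDerivPS q (qExp q) = qExp q := by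
  ext n
  simp only [qDerivPS, qExp, coeff_mk, qFact_succ]
  field_simp [(qInt_pos hq n.succ_pos).ne']

lemma mul_rescale_of_qExp_add_one_mul_eq {q : ℝ} (hq0 : 0 < q) (hq1 : q ≠ 1) {F : ℝ⟦X⟧}
    (hF : (qExp q + 1) * F = 2 * PowerSeries.X) :
    F * rescale q F = 2 * (PowerSeries.X * qDerivPS q F) - 2 * F
      + 2 * (PowerSeries.X * rescale q F) := by
  have hE := C_mul_X_mul_qDerivPS q (qExp q)
  rw [qDerivPS_qExp hq0] at hE
  have hFq := congrArg (rescale q) hF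
  rw [map_mul, map_add, map_one, map_mul, rescale_X, map_ofNat] at hFq
  have hD := C_mul_X_mul_qDerivPS q F
  have hC : PowerSeries.C q = PowerSeries.C (q - 1) + 1 := by
    rw [map_sub, map_one, sub_add_cancel]
  have hCX : PowerSeries.C (q - 1) * PowerSeries.X ≠ (0 : ℝ⟦X⟧) :=
    mul_ne_zero ((map_ne_zero_iff _ PowerSeries.C_injective).mpr (sub_ne_zero.mpr hq1)) X_ne_zero
  apply mul_left_cancel₀ hCX
  linear_combination (1 + PowerSeries.C (q - 1) * PowerSeries.X) * rescale q F * hF - F * hFq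
    - 2 * PowerSeries.X * hD - F * rescale q F * hE - 2 * PowerSeries.X * F * hC

lemma coeff_zero_of_qExp_add_one_mul_eq {q : ℝ} {F : ℝ⟦X⟧}
    (hF : (qExp q + 1) * F = 2 * PowerSeries.X) : PowerSeries.coeff 0 F = 0 := by
  have h := congrArg (PowerSeries.coeff 0) hF
  simpa [qExp, qFact] using h

lemma coeff_one_of_qExp_add_one_mul_eq {q : ℝ} {F : ℝ⟦X⟧}
    (hF : (qExp q + 1) * F = 2 * PowerSeries.X) : PowerSeries.coeff 1 F = 1 := by
  have h := congrArg (PowerSeries.coeff 1) hF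
  simp [PowerSeries.coeff_mul, Nat.sum_antidiagonal_eq_sum_range_succ_mk, sum_range_succ, qExp,
    qFact, qInt_one, coeff_zero_of_qExp_add_one_mul_eq hF, map_ofNat] at h
  linarith

lemma sum_Icc_coeff_mul_coeff_of_qExp_add_one_mul_eq {q : ℝ} (hq0 : 0 < q) (hq1 : q ≠ 1)
    {F : ℝ⟦X⟧} (hF : (qExp q + 1) * F = 2 * PowerSeries.X) (j : ℕ) :
    ∑ k ∈ Icc 2 (j + 1),
        PowerSeries.coeff k F * (q ^ (j + 1 - k) * PowerSeries.coeff (j + 1 - k) F)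
      = q ^ j * PowerSeries.coeff j F + 2 * q * qInt q j * PowerSeries.coeff (j + 1) F := by
  have h := congrArg (PowerSeries.coeff (j + 1)) (mul_rescale_of_qExp_add_one_mul_eq hq0 hq1 hF)
  rw [PowerSeries.coeff_mul, Nat.sum_antidiagonal_eq_sum_range_succ_mk, range_eq_Ico,
    sum_eq_sum_Ico_succ_bot (by omega), sum_eq_sum_Ico_succ_bot (by omega)] at h
  simp only [Nat.succ_eq_add_one, zero_add, Nat.reduceAdd, Ico_add_one_right_eq_Icc, two_mul,
    Nat.add_sub_cancel, zero_mul, one_mul, map_add, map_sub, coeff_succ_X_mul, coeff_rescale,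
    qDerivPS, coeff_mk, coeff_zero_of_qExp_add_one_mul_eq hF,
    coeff_one_of_qExp_add_one_mul_eq hF] at h
  have hj : qInt q (j + 1) = 1 + q * qInt q j := by rw [add_comm, qInt_add, qInt_one, pow_one]
  rw [hj] at h
  linear_combination h

end PowerSeries

theorem qGenocchi_qDifference_equation_general (q : ℝ) (hq0 : 0 < q) (hq1 : q < 1)
    (g : ℕ → ℝ)
    (hg : (qExp q + 1) * PowerSeries.mk (fun n => g n / qFact q n) = 2 * PowerSeries.X)
    (n : ℕ) :
    (∑ k ∈ Finset.Icc 2 n,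
        Polynomial.C (q ^ (n - k) / q * g k / (2 * qFact q k))
          * (qDeriv q)^[k] (qGenocchiPoly q g n))
      - Polynomial.C (q ^ n / q ^ 2 / 2) * qDeriv q (qGenocchiPoly q g n)
      + Polynomial.C (q ^ (n - 1)) * qGenocchiPoly q g n
      + Polynomial.C (q ^ n) * Polynomial.X * qDeriv q (qGenocchiPoly q g n)
      - Polynomial.C (qInt q n)
          * (qGenocchiPoly q g n).comp (Polynomial.C q * Polynomial.X) = 0 := by
  have hF := sum_Icc_coeff_mul_coeff_of_qExp_add_one_mul_eq hq0 hq1.ne hg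
  simp only [PowerSeries.coeff_mk] at hF
  have hg0 : g 0 / qFact q 0 = 0 := by simpa using coeff_zero_of_qExp_add_one_mul_eq hg
  have hD1 : ∀ m, (qDeriv q (qGenocchiPoly q g n)).coeff m = _ :=
    coeff_qDeriv_iterate_qGenocchiPoly hq0 g 1 n
  ext m
  simp only [coeff_sub, coeff_add, coeff_C_mul, mul_assoc, coeff_X_mul_qDeriv, comp_C_mul_X_coeff,
    coeff_zero, coeff_qGenocchiPoly, hD1]
  rcases le_or_gt m n with hmn | hmn
  swap
  · have hk : ∀ k, ¬ m + k ≤ n := fun k => by omega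
    simp [finsetSum_coeff, coeff_qDeriv_iterate_qGenocchiPoly hq0, hk, hmn.not_ge]
  obtain ⟨j, rfl⟩ := Nat.exists_eq_add_of_le hmn
  simp only [coeff_sum_Icc_qDeriv_iterate_qGenocchiPoly hq0, Nat.add_sub_cancel_left,
    Nat.add_sub_add_left, add_le_add_iff_left, if_pos hmn]
  rcases j with _ | j
  · simp [hg0]
  have hsum : ∑ k ∈ Icc 2 (j + 1), q ^ (m + (j + 1) - k) / q * g k / (2 * qFact q k) *
        (g (j + 1 - k) / qFact q (j + 1 - k))
      = q ^ m / (2 * q) *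
        (q ^ j * (g j / qFact q j) + 2 * q * qInt q j * (g (j + 1) / qFact q (j + 1))) := by
    rw [← hF, mul_sum]
    refine sum_congr rfl fun k hk => ?_
    rw [Nat.add_sub_assoc (mem_Icc.mp hk).2, pow_add]
    ring
  rw [hsum, if_pos (by omega), Nat.add_sub_cancel, show m + (j + 1) - 1 = m + j by omega,
    add_comm m (j + 1), qInt_add q (j + 1) m, qInt_add q j 1, qInt_one]
  field_simp
  ring

/-- The q-Genocchi polynomial G_{n,q} satisfies the q-difference equation
`Σ_{k=2}^n (q^(n-k-1) g_{k,q}/(2 [k]_q!)) D_q^k G_{n,q}(x) − (q^(n-2)/2) D_q G_{n,q}(x)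
  + q^(n-1) G_{n,q}(x) + x q^n D_q G_{n,q}(x) − [n]_q G_{n,q}(qx) = 0` for n ≥ 1. -/
theorem qGenocchi_qDifference_equation (q : ℝ) (hq0 : 0 < q) (hq1 : q < 1)
    (g : ℕ → ℝ)
    (hg : (qExp q + 1) * PowerSeries.mk (fun n => g n / qFact q n) = 2 * PowerSeries.X)
    (n : ℕ) (hn : 1 ≤ n) :
    (∑ k ∈ Finset.Icc 2 n,
        Polynomial.C (q ^ (n - k) / q * g k / (2 * qFact q k))
          * (qDeriv q)^[k] (qGenocchiPoly q g n))
      - Polynomial.C (q ^ n / q ^ 2 / 2) * qDeriv q (qGenocchiPoly q g n)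
      + Polynomial.C (q ^ (n - 1)) * qGenocchiPoly q g n
      + Polynomial.C (q ^ n) * Polynomial.X * qDeriv q (qGenocchiPoly q g n)
      - Polynomial.C (qInt q n)
          * (qGenocchiPoly q g n).comp (Polynomial.C q * Polynomial.X) = 0 :=
  qGenocchi_qDifference_equation_general q hq0 hq1 g hg n
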